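/- arXiv:1210.4505 — 3 statements merged into one kernel-verified Lean document; each statement's English description precedes it below -/
import Mathlib

section
/- Let ν ≥ 1/2, w > 0, and let mmse be the canonical MMSE of an arbitrary discrete input with finite support and M[mmse;·] its Mellin transform. Then for every M ∈ ℕ, as snr → +∞, ∫₀^∞ g(t)·mmse(snr·t) dt = (ν^ν/(Γ(ν)·w^ν)) · ∑_{m=0}^{M} ((−1)^m·ν^m/(m!·w^m)) · M[mmse; 1+ν+m] · snr^{−1−ν−m} + O(snr^{−2−ν−M}), where g is the Nakagami fading kernel. (High-snr expansion of the average MMSE in a Nakagami fading coherent channel driven by a discrete input.) -/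
/-!
Substituting `u = snr·t`, the average equals `C·snr^(-1-ν) ∫₀^∞ e^{-λu} u^ν mmse(u) du` with
`λ = ν/(w·snr) → 0`. Expanding `e^{-λu}` to order `M` reproduces the Mellin terms one by one, and
the alternating Taylor remainder `|R_M(λu)| ≤ (λu)^(M+1)/(M+1)!` leaves an error of order
`λ^(M+1)` times a moment of `mmse`. These moments are finite because
`mmse(s) ≤ ∑_{i,j} √(p_i p_j)·|x_i - x_j|²·e^{-s|x_i - x_j|²/4}`: the error `x_i - X̂` is a
posterior average of the `x_i - x_j` (Jensen), the posterior weight of `x_j` times the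
likelihood `W_i` of `x_i` is at most `√(p_j/p_i)·√(W_i W_j)`, and the geometric mean of two
Gaussians centred at `√s·x_i`, `√s·x_j` is `e^{-s|x_i - x_j|²/4}` times a Gaussian centred at
their midpoint.
-/

open MeasureTheory Filter Asymptotics Topology

/-- Gaussian weight `exp(-|y - √s·x|²)`. -/
noncomputable def gaussWeight (s : ℝ) (x y : ℂ) : ℝ :=
  Real.exp (-(‖y - (Real.sqrt s : ℂ) * x‖) ^ 2)

/-- Conditional-mean estimator `X̂_s(y)` for a discrete input with points `x` and weights `p`. -/
noncomputable def condMean {K : ℕ} (x : Fin K → ℂ) (p : Fin K → ℝ) (s : ℝ) (y : ℂ) : ℂ :=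
  (∑ j, (p j : ℂ) * x j * (gaussWeight s (x j) y : ℂ)) /
    (∑ j, (p j : ℂ) * (gaussWeight s (x j) y : ℂ))

/-- Canonical MMSE of a discrete input with finite support in the AWGN channel. -/
noncomputable def discreteMMSE {K : ℕ} (x : Fin K → ℂ) (p : Fin K → ℝ) (s : ℝ) : ℝ :=
  ∑ i, p i * ∫ y : ℂ,
    (‖x i - condMean x p s y‖) ^ 2 * Real.pi⁻¹ * gaussWeight s (x i) y

/-- Real Mellin transform `M[f; z] = ∫₀^∞ t^{z-1} f(t) dt`. -/
noncomputable def mellinR (f : ℝ → ℝ) (z : ℝ) : ℝ :=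
  ∫ t in Set.Ioi (0 : ℝ), t ^ (z - 1) * f t

/-- Nakagami fading kernel `g(t) = (ν^ν/(Γ(ν)·w^ν))·t^ν·e^{-νt/w}`. -/
noncomputable def nakagamiKernel (ν w t : ℝ) : ℝ :=
  ν ^ ν / (Real.Gamma ν * w ^ ν) * t ^ ν * Real.exp (-(ν * t / w))

open Real Set

noncomputable def expNegTaylorRemainder (n : ℕ) (x : ℝ) : ℝ :=
  rexp (-x) - ∑ m ∈ Finset.range (n + 1), (-x) ^ m / m.factorial

lemma expNegTaylorRemainder_zero_right (n : ℕ) : expNegTaylorRemainder n 0 = 0 := by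
  simp [expNegTaylorRemainder, Finset.sum_range_succ']

lemma continuous_expNegTaylorRemainder (n : ℕ) : Continuous (expNegTaylorRemainder n) := by
  unfold expNegTaylorRemainder
  fun_prop

lemma hasDerivAt_expNegTaylorRemainder_succ (n : ℕ) (t : ℝ) :
    HasDerivAt (expNegTaylorRemainder (n + 1)) (-expNegTaylorRemainder n t) t := by
  have hterm : ∀ m ∈ Finset.range (n + 1), HasDerivAt
      (fun u : ℝ => (-u) ^ (m + 1) / (m + 1).factorial) (-((-t) ^ m / m.factorial)) t := by
    intro m _
    refine (((hasDerivAt_id t).neg.fun_pow (m + 1)).div_const _).congr_deriv ?_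
    rw [Nat.factorial_succ]
    push_cast
    field_simp
    simp
  have hsplit : expNegTaylorRemainder (n + 1) = fun u =>
      rexp (-u) - (1 + ∑ m ∈ Finset.range (n + 1), (-u) ^ (m + 1) / (m + 1).factorial) := by
    funext u
    rw [expNegTaylorRemainder, Finset.sum_range_succ' _ (n + 1)]
    simp [add_comm]
  rw [hsplit]
  refine ((hasDerivAt_id t).neg.exp.sub
    ((hasDerivAt_const t 1).add (HasDerivAt.fun_sum hterm))).congr_deriv ?_
  simp only [expNegTaylorRemainder, Finset.sum_neg_distrib, Pi.neg_apply, id_eq]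
  ring

lemma abs_expNegTaylorRemainder_le (n : ℕ) {x : ℝ} (hx : 0 ≤ x) :
    |expNegTaylorRemainder n x| ≤ x ^ (n + 1) / (n + 1).factorial := by
  induction n generalizing x with
  | zero =>
    have h1 : rexp (-x) ≤ 1 := exp_le_one_iff.mpr (by linarith)
    have h2 : 1 - x ≤ rexp (-x) := by linarith [add_one_le_exp (-x)]
    simp only [expNegTaylorRemainder, zero_add, Finset.sum_range_one, pow_zero,
      Nat.factorial_zero, Nat.cast_one, div_one, pow_one, Nat.factorial_one]
    rw [abs_le]
    constructor <;> linarith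
  | succ n ih =>
    have hftc :
        ∫ t in (0 : ℝ)..x, -expNegTaylorRemainder n t = expNegTaylorRemainder (n + 1) x := by
      rw [intervalIntegral.integral_eq_sub_of_hasDerivAt
        (fun t _ => hasDerivAt_expNegTaylorRemainder_succ n t)
        ((continuous_expNegTaylorRemainder n).neg.intervalIntegrable _ _),
        expNegTaylorRemainder_zero_right, sub_zero]
    rw [← hftc, ← Real.norm_eq_abs]
    calc ‖∫ t in (0 : ℝ)..x, -expNegTaylorRemainder n t‖
        ≤ ∫ t in (0 : ℝ)..x, t ^ (n + 1) / (n + 1).factorial :=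
          intervalIntegral.norm_integral_le_of_norm_le hx
            (Eventually.of_forall fun t ht => by
              rw [norm_neg, Real.norm_eq_abs]; exact ih ht.1.le)
            ((by fun_prop : Continuous fun t : ℝ => t ^ (n + 1) / (n + 1).factorial
              ).intervalIntegrable _ _)
      _ = x ^ (n + 2) / (n + 2).factorial := by
          rw [intervalIntegral.integral_div, integral_pow, Nat.factorial_succ (n + 1)]
          push_cast
          field_simp
          ring

lemma abs_integral_exp_mul_sub_sum_le {φ : ℝ → ℝ} {M : ℕ}
    (hφ : ∀ m ≤ M + 1, IntegrableOn (fun u => u ^ m * φ u) (Ioi 0)) {c : ℝ} (hc : 0 ≤ c) :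
    |(∫ u in Ioi 0, rexp (-(c * u)) * φ u) -
        ∑ m ∈ Finset.range (M + 1), (-c) ^ m / m.factorial * ∫ u in Ioi 0, u ^ m * φ u| ≤
      c ^ (M + 1) / (M + 1).factorial * ∫ u in Ioi 0, u ^ (M + 1) * |φ u| := by
  have hexp : IntegrableOn (fun u => rexp (-(c * u)) * φ u) (Ioi 0) := by
    have hφ₀ : IntegrableOn φ (Ioi 0) := by simpa using hφ 0 (Nat.zero_le _)
    refine Integrable.bdd_mul (c := 1) hφ₀ (by fun_prop) ?_
    filter_upwards [ae_restrict_mem measurableSet_Ioi] with u (hu : 0 < u)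
    rw [norm_of_nonneg (exp_nonneg _), exp_le_one_iff]
    exact neg_nonpos.mpr (by positivity)
  have hterm : ∀ m ∈ Finset.range (M + 1),
      IntegrableOn (fun u => (-c) ^ m / m.factorial * (u ^ m * φ u)) (Ioi 0) :=
    fun m hm => (hφ m (Finset.mem_range.mp hm).le).const_mul _
  have hremainder : (∫ u in Ioi 0, rexp (-(c * u)) * φ u) -
      ∑ m ∈ Finset.range (M + 1), (-c) ^ m / m.factorial * ∫ u in Ioi 0, u ^ m * φ u =
      ∫ u in Ioi 0, expNegTaylorRemainder M (c * u) * φ u := by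
    simp_rw [← integral_const_mul]
    rw [← integral_finsetSum _ hterm, ← integral_sub hexp (integrable_finsetSum _ hterm)]
    congr 1 with u
    simp only [expNegTaylorRemainder, sub_mul, Finset.sum_mul]
    congr 1
    exact Finset.sum_congr rfl fun m _ => by rw [neg_mul_eq_neg_mul, mul_pow]; ring
  rw [hremainder, ← Real.norm_eq_abs, ← integral_const_mul]
  have hmoment : IntegrableOn (fun u => u ^ (M + 1) * |φ u|) (Ioi 0) :=
    IntegrableOn.congr_fun (hφ (M + 1) le_rfl).norm (fun u (hu : 0 < u) => by
      rw [Real.norm_eq_abs, abs_mul, abs_pow, abs_of_pos hu]) measurableSet_Ioi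
  refine norm_integral_le_of_norm_le (hmoment.const_mul _) ?_
  filter_upwards [ae_restrict_mem measurableSet_Ioi] with u (hu : 0 < u)
  rw [norm_mul, Real.norm_eq_abs, Real.norm_eq_abs]
  calc |expNegTaylorRemainder M (c * u)| * |φ u|
      ≤ (c * u) ^ (M + 1) / (M + 1).factorial * |φ u| := by
        gcongr
        exact abs_expNegTaylorRemainder_le M (by positivity)
    _ = _ := by ring

lemma setIntegral_nakagamiKernel_mul_comp_mul (ν w : ℝ) (f : ℝ → ℝ) {snr : ℝ} (hsnr : 0 < snr) :
    ∫ t in Ioi 0, nakagamiKernel ν w t * f (snr * t) =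
      ν ^ ν / (Gamma ν * w ^ ν) * snr ^ (-1 - ν) *
        ∫ u in Ioi 0, rexp (-(ν / (w * snr) * u)) * (u ^ ν * f u) := by
  have h := integral_comp_mul_left_Ioi (fun u => nakagamiKernel ν w (u / snr) * f u) 0 hsnr
  rw [mul_zero, smul_eq_mul] at h
  simp only [mul_div_cancel_left₀ _ hsnr.ne'] at h
  rw [h, ← integral_const_mul, ← integral_const_mul]
  refine setIntegral_congr_fun measurableSet_Ioi fun u (hu : 0 < u) => ?_
  rw [nakagamiKernel, div_rpow hu.le hsnr.le, sub_eq_add_neg, rpow_add hsnr, rpow_neg_one,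
    rpow_neg hsnr.le]
  field_simp

lemma pow_mul_rpow_mul_eq {u : ℝ} (hu : 0 < u) (ν : ℝ) (m : ℕ) (c : ℝ) :
    u ^ m * (u ^ ν * c) = u ^ (ν + m) * c := by
  rw [← mul_assoc, ← rpow_natCast, ← rpow_add hu, add_comm]

lemma mellinR_one_add_add_natCast (f : ℝ → ℝ) (ν : ℝ) (m : ℕ) :
    mellinR f (1 + ν + m) = ∫ u in Ioi 0, u ^ m * (u ^ ν * f u) :=
  setIntegral_congr_fun measurableSet_Ioi fun u (hu : 0 < u) => by
    rw [pow_mul_rpow_mul_eq hu]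
    ring_nf

theorem nakagami_average_sub_expansion_isBigO {ν w : ℝ} (hν : 0 ≤ ν) (hw : 0 < w)
    {f : ℝ → ℝ} {M : ℕ}
    (hf : ∀ m ≤ M + 1, IntegrableOn (fun u => u ^ (ν + m) * f u) (Ioi 0)) :
    (fun snr : ℝ =>
        (∫ t in Ioi (0 : ℝ), nakagamiKernel ν w t * f (snr * t)) -
          ν ^ ν / (Gamma ν * w ^ ν) *
            ∑ m ∈ Finset.range (M + 1),
              (-1 : ℝ) ^ m * ν ^ m / ((m.factorial : ℝ) * w ^ m) *
                mellinR f (1 + ν + m) * snr ^ (-(1 : ℝ) - ν - m))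
      =O[atTop] (fun snr : ℝ => snr ^ (-(2 : ℝ) - ν - M)) := by
  set C := ν ^ ν / (Gamma ν * w ^ ν)
  set I := ∫ u in Ioi 0, u ^ (M + 1) * |u ^ ν * f u|
  refine isBigO_iff.mpr ⟨|C| * ((ν / w) ^ (M + 1) / (M + 1).factorial * I), ?_⟩
  filter_upwards [eventually_gt_atTop 0] with snr hsnr
  have hterm : ∀ m : ℕ, (-1 : ℝ) ^ m * ν ^ m / ((m.factorial : ℝ) * w ^ m) *
      mellinR f (1 + ν + m) * snr ^ (-(1 : ℝ) - ν - m) = snr ^ (-1 - ν) *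
        ((-(ν / (w * snr))) ^ m / m.factorial * ∫ u in Ioi 0, u ^ m * (u ^ ν * f u)) := by
    intro m
    rw [mellinR_one_add_add_natCast, sub_eq_add_neg _ (m : ℝ), rpow_add hsnr, rpow_neg hsnr.le,
      rpow_natCast, neg_pow (ν / (w * snr)), div_pow, mul_pow]
    field_simp
  have hφ : ∀ m ≤ M + 1, IntegrableOn (fun u => u ^ m * (u ^ ν * f u)) (Ioi 0) := fun m hm =>
    (hf m hm).congr_fun (fun u (hu : 0 < u) => (pow_mul_rpow_mul_eq hu ν m _).symm)
      measurableSet_Ioi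
  have hdiff := abs_integral_exp_mul_sub_sum_le hφ (c := ν / (w * snr)) (by positivity)
  rw [setIntegral_nakagamiKernel_mul_comp_mul ν w f hsnr]
  simp_rw [hterm, ← Finset.mul_sum]
  have hpow : snr ^ (-1 - ν) * (ν / (w * snr)) ^ (M + 1) =
      (ν / w) ^ (M + 1) * snr ^ (-(2 : ℝ) - ν - M) := by
    rw [div_mul_eq_div_div, div_pow _ snr, ← rpow_natCast snr, div_eq_mul_inv _ (snr ^ _),
      ← rpow_neg hsnr.le, mul_left_comm, ← rpow_add hsnr]
    push_cast
    ring_nf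
  rw [mul_assoc C, ← mul_sub, ← mul_sub, norm_mul, norm_mul,
    norm_of_nonneg (rpow_nonneg hsnr.le _), norm_of_nonneg (rpow_nonneg hsnr.le _),
    Real.norm_eq_abs, Real.norm_eq_abs]
  calc |C| * (snr ^ (-1 - ν) * |_|)
      ≤ |C| * (snr ^ (-1 - ν) * ((ν / (w * snr)) ^ (M + 1) / (M + 1).factorial * I)) := by
        gcongr
    _ = |C| * ((ν / w) ^ (M + 1) / (M + 1).factorial * I) * snr ^ (-(2 : ℝ) - ν - M) := by
        linear_combination |C| * I / (M + 1).factorial * hpow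

lemma gaussWeight_pos (s : ℝ) (x y : ℂ) : 0 < gaussWeight s x y := exp_pos _

lemma integral_gaussWeight (s : ℝ) (x : ℂ) : ∫ y, gaussWeight s x y = π := by
  simp only [gaussWeight]
  rw [integral_sub_right_eq_self (fun y : ℂ => rexp (-‖y‖ ^ 2))]
  simpa using GaussianFourier.integral_rexp_neg_mul_sq_norm (V := ℂ) one_pos

lemma integrable_gaussWeight (s : ℝ) (x : ℂ) : Integrable (gaussWeight s x) :=
  .of_integral_ne_zero (by rw [integral_gaussWeight]; exact pi_ne_zero)

lemma sqrt_gaussWeight_mul_gaussWeight {s : ℝ} (hs : 0 ≤ s) (u v y : ℂ) :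
    √(gaussWeight s u y * gaussWeight s v y) =
      rexp (-(s * ‖u - v‖ ^ 2 / 4)) * gaussWeight s ((u + v) / 2) y := by
  have h :=
    parallelogram_law_with_norm ℝ (y - (√s : ℂ) * ((u + v) / 2)) ((√s : ℂ) * ((v - u) / 2))
  rw [show y - (√s : ℂ) * ((u + v) / 2) + (√s : ℂ) * ((v - u) / 2) = y - (√s : ℂ) * u by ring,
    show y - (√s : ℂ) * ((u + v) / 2) - (√s : ℂ) * ((v - u) / 2) = y - (√s : ℂ) * v by ring,
    norm_mul, mul_pow, Complex.norm_real, norm_of_nonneg (sqrt_nonneg s), sq_sqrt hs, norm_div,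
    norm_sub_rev v, div_pow] at h
  simp only [gaussWeight]
  rw [← exp_add, ← exp_half, ← exp_add]
  congr 1
  norm_num at h
  linarith

lemma norm_inv_sum_smul_sum_sq_le {ι E : Type*} [SeminormedAddCommGroup E] [NormedSpace ℝ E]
    (s : Finset ι) {a : ι → ℝ} (ha : ∀ i ∈ s, 0 < a i) (v : ι → E) :
    ‖(∑ i ∈ s, a i)⁻¹ • ∑ i ∈ s, a i • v i‖ ^ 2 ≤
      (∑ i ∈ s, a i * ‖v i‖ ^ 2) / ∑ i ∈ s, a i := by
  have hS : 0 ≤ ∑ i ∈ s, a i := Finset.sum_nonneg fun i hi => (ha i hi).le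
  have hnorm :
      ‖(∑ i ∈ s, a i)⁻¹ • ∑ i ∈ s, a i • v i‖ ≤ (∑ i ∈ s, a i * ‖v i‖) / ∑ i ∈ s, a i := by
    rw [norm_smul, norm_inv, norm_of_nonneg hS, inv_mul_eq_div]
    gcongr
    refine (norm_sum_le _ _).trans_eq (Finset.sum_congr rfl fun i hi => ?_)
    rw [norm_smul, norm_of_nonneg (ha i hi).le]
  have hcs := Finset.sq_sum_div_le_sum_sq_div s (fun i => a i * ‖v i‖) ha
  calc _ ≤ ((∑ i ∈ s, a i * ‖v i‖) / ∑ i ∈ s, a i) ^ 2 := by gcongr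
    _ = (∑ i ∈ s, a i * ‖v i‖) ^ 2 / (∑ i ∈ s, a i) / ∑ i ∈ s, a i := by ring
    _ ≤ (∑ i ∈ s, (a i * ‖v i‖) ^ 2 / a i) / ∑ i ∈ s, a i := by gcongr
    _ = _ := by
      congr 1
      exact Finset.sum_congr rfl fun i hi => by field_simp [(ha i hi).ne']

lemma mul_le_mul_sqrt_mul_of_le {a b c : ℝ} (ha : 0 ≤ a) (hb : 0 ≤ b) (hac : a ≤ c)
    (hbc : b ≤ c) :
    a * b ≤ c * √(a * b) := by
  have hc : 0 ≤ c := ha.trans hac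
  calc a * b = √(a * b) * √(a * b) := (mul_self_sqrt (mul_nonneg ha hb)).symm
    _ ≤ c * √(a * b) := by
      gcongr
      calc √(a * b) ≤ √(c * c) := sqrt_le_sqrt (mul_le_mul hac hbc hb hc)
        _ = c := sqrt_mul_self hc

section DiscreteInput

variable {K : ℕ} (x : Fin K → ℂ) {p : Fin K → ℝ}

lemma sum_mul_gaussWeight_pos [Nonempty (Fin K)] (hp : ∀ j, 0 < p j) (s : ℝ) (y : ℂ) :
    0 < ∑ j, p j * gaussWeight s (x j) y :=
  Finset.sum_pos (fun j _ => mul_pos (hp j) (gaussWeight_pos _ _ _)) Finset.univ_nonempty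

lemma sub_condMean_eq [Nonempty (Fin K)] (hp : ∀ j, 0 < p j) (i : Fin K) (s : ℝ) (y : ℂ) :
    x i - condMean x p s y = (∑ j, p j * gaussWeight s (x j) y)⁻¹ •
      ∑ j, (p j * gaussWeight s (x j) y) • (x i - x j) := by
  have hS : ((∑ j, p j * gaussWeight s (x j) y : ℝ) : ℂ) ≠ 0 :=
    Complex.ofReal_ne_zero.mpr (sum_mul_gaussWeight_pos x hp s y).ne'
  simp only [condMean, Complex.real_smul, mul_sub, Finset.sum_sub_distrib, ← Finset.sum_mul]
  push_cast at hS ⊢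
  rw [Finset.sum_congr rfl fun j _ => mul_right_comm (p j : ℂ) (x j) _]
  field_simp

lemma mul_norm_sub_condMean_sq_mul_le (hp : ∀ j, 0 < p j) (i : Fin K) (s : ℝ) (y : ℂ) :
    p i * ‖x i - condMean x p s y‖ ^ 2 * gaussWeight s (x i) y ≤
      ∑ j, √(p i * p j) * ‖x i - x j‖ ^ 2 *
        √(gaussWeight s (x i) y * gaussWeight s (x j) y) := by
  have : Nonempty (Fin K) := ⟨i⟩
  set a : Fin K → ℝ := fun j => p j * gaussWeight s (x j) y
  have ha : ∀ j, 0 < a j := fun j => mul_pos (hp j) (gaussWeight_pos _ _ _)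
  have hS : 0 < ∑ j, a j := sum_mul_gaussWeight_pos x hp s y
  have hle : ∀ j, a j ≤ ∑ k, a k := fun j =>
    Finset.single_le_sum (fun k _ => (ha k).le) (Finset.mem_univ j)
  have hjensen := norm_inv_sum_smul_sum_sq_le Finset.univ (fun j _ => ha j) (fun j => x i - x j)
  rw [← sub_condMean_eq x hp] at hjensen
  calc p i * ‖x i - condMean x p s y‖ ^ 2 * gaussWeight s (x i) y
      = a i * ‖x i - condMean x p s y‖ ^ 2 := by ring
    _ ≤ a i * ((∑ j, a j * ‖x i - x j‖ ^ 2) / ∑ j, a j) := by gcongr; exact (ha i).le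
    _ = ∑ j, a i * a j / (∑ k, a k) * ‖x i - x j‖ ^ 2 := by
      rw [mul_div_assoc', Finset.mul_sum, Finset.sum_div]
      exact Finset.sum_congr rfl fun j _ => by ring
    _ ≤ ∑ j, √(a i * a j) * ‖x i - x j‖ ^ 2 := by
      gcongr with j
      rw [div_le_iff₀' hS]
      exact mul_le_mul_sqrt_mul_of_le (ha i).le (ha j).le (hle i) (hle j)
    _ = _ := Finset.sum_congr rfl fun j _ => by
      rw [show a i * a j = (p i * p j) * (gaussWeight s (x i) y * gaussWeight s (x j) y) by ring,
        sqrt_mul (mul_nonneg (hp i).le (hp j).le)]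
      ring

lemma discreteMMSE_le (hp : ∀ j, 0 < p j) {s : ℝ} (hs : 0 ≤ s) :
    discreteMMSE x p s ≤
      ∑ i, ∑ j, √(p i * p j) * ‖x i - x j‖ ^ 2 * rexp (-(s * ‖x i - x j‖ ^ 2 / 4)) := by
  refine Finset.sum_le_sum fun i _ => ?_
  rw [← integral_const_mul]
  calc ∫ y, p i * (‖x i - condMean x p s y‖ ^ 2 * π⁻¹ * gaussWeight s (x i) y)
      ≤ ∫ y, ∑ j, √(p i * p j) * ‖x i - x j‖ ^ 2 * rexp (-(s * ‖x i - x j‖ ^ 2 / 4)) * π⁻¹ *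
          gaussWeight s ((x i + x j) / 2) y := by
        refine integral_mono_of_nonneg (Eventually.of_forall fun y => ?_)
          (integrable_finsetSum _ fun j _ => (integrable_gaussWeight _ _).const_mul _)
          (Eventually.of_forall fun y => ?_)
        · have := (hp i).le
          have := (gaussWeight_pos s (x i) y).le
          positivity
        · have h := mul_norm_sub_condMean_sq_mul_le x hp i s y
          simp only [sqrt_gaussWeight_mul_gaussWeight hs] at h
          calc _ = p i * ‖x i - condMean x p s y‖ ^ 2 * gaussWeight s (x i) y * π⁻¹ := by ring
            _ ≤ _ := mul_le_mul_of_nonneg_right h (by positivity)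
            _ = _ := by rw [Finset.sum_mul]; exact Finset.sum_congr rfl fun j _ => by ring
    _ = _ := by
        rw [integral_finsetSum _ fun j _ => (integrable_gaussWeight _ _).const_mul _]
        refine Finset.sum_congr rfl fun j _ => ?_
        rw [integral_const_mul, integral_gaussWeight]
        field_simp

lemma discreteMMSE_nonneg (hp : ∀ j, 0 < p j) (s : ℝ) : 0 ≤ discreteMMSE x p s :=
  Finset.sum_nonneg fun i _ => mul_nonneg (hp i).le <| integral_nonneg fun y => by
    have := (gaussWeight_pos s (x i) y).le
    positivity

lemma measurable_discreteMMSE (p : Fin K → ℝ) : Measurable (discreteMMSE x p) := by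
  refine Finset.measurable_sum _ fun i _ => Measurable.const_mul ?_ _
  have h : Measurable fun q : ℝ × ℂ =>
      ‖x i - condMean x p q.1 q.2‖ ^ 2 * π⁻¹ * gaussWeight q.1 (x i) q.2 := by
    unfold condMean gaussWeight
    fun_prop
  exact h.stronglyMeasurable.integral_prod_right'.measurable

lemma integrableOn_rpow_mul_discreteMMSE (hp : ∀ j, 0 < p j) {a : ℝ} (ha : -1 < a) :
    IntegrableOn (fun u => u ^ a * discreteMMSE x p u) (Ioi 0) := by
  have hterm : ∀ i j, IntegrableOn (fun u => √(p i * p j) * ‖x i - x j‖ ^ 2 *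
      (u ^ a * rexp (-(‖x i - x j‖ ^ 2 / 4) * u ^ (1 : ℝ)))) (Ioi 0) := by
    intro i j
    by_cases hij : x i = x j
    · simp [hij]
    · have : 0 < ‖x i - x j‖ := norm_pos_iff.mpr (sub_ne_zero.mpr hij)
      exact (integrableOn_rpow_mul_exp_neg_mul_rpow ha one_pos (by positivity)).const_mul _
  refine Integrable.mono'
    (integrable_finsetSum Finset.univ fun i _ => integrable_finsetSum Finset.univ fun j _ =>
      hterm i j)
    ((measurable_id.pow_const a).mul (measurable_discreteMMSE x p)).aestronglyMeasurable ?_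
  filter_upwards [ae_restrict_mem measurableSet_Ioi] with u (hu : 0 < u)
  have hua := rpow_nonneg hu.le a
  rw [norm_of_nonneg (mul_nonneg hua (discreteMMSE_nonneg x hp u))]
  calc u ^ a * discreteMMSE x p u
      ≤ u ^ a * ∑ i, ∑ j, √(p i * p j) * ‖x i - x j‖ ^ 2 * rexp (-(u * ‖x i - x j‖ ^ 2 / 4)) :=
        mul_le_mul_of_nonneg_left (discreteMMSE_le x hp hu.le) hua
    _ = _ := by
      simp only [Finset.mul_sum, rpow_one]
      exact Finset.sum_congr rfl fun i _ => Finset.sum_congr rfl fun j _ => by ring_nf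

end DiscreteInput

theorem highSnr_avgMMSE_nakagami_general (ν w : ℝ) (hν : 1 / 2 ≤ ν) (hw : 0 < w)
    {K : ℕ} (x : Fin K → ℂ) (p : Fin K → ℝ)
    (hp : ∀ j, 0 < p j)
    (M : ℕ) :
    (fun snr : ℝ =>
        (∫ t in Set.Ioi (0 : ℝ), nakagamiKernel ν w t * discreteMMSE x p (snr * t)) -
          ν ^ ν / (Real.Gamma ν * w ^ ν) *
            ∑ m ∈ Finset.range (M + 1),
              (-1 : ℝ) ^ m * ν ^ m / ((m.factorial : ℝ) * w ^ m) *
                mellinR (discreteMMSE x p) (1 + ν + m) * snr ^ (-(1 : ℝ) - ν - m))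
      =O[atTop] (fun snr : ℝ => snr ^ (-(2 : ℝ) - ν - M)) :=
  nakagami_average_sub_expansion_isBigO (by linarith) hw fun m _ =>
    integrableOn_rpow_mul_discreteMMSE x hp (by linarith [m.cast_nonneg (α := ℝ)])

/-- High-snr expansion of the average MMSE in a Nakagami fading coherent channel
driven by an arbitrary discrete input with finite support. -/
theorem highSnr_avgMMSE_nakagami (ν w : ℝ) (hν : 1 / 2 ≤ ν) (hw : 0 < w)
    {K : ℕ} (hK : 0 < K) (x : Fin K → ℂ) (p : Fin K → ℝ)
    (hx : Function.Injective x) (hp : ∀ j, 0 < p j) (hsum : ∑ j, p j = 1)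
    (M : ℕ) :
    (fun snr : ℝ =>
        (∫ t in Set.Ioi (0 : ℝ), nakagamiKernel ν w t * discreteMMSE x p (snr * t)) -
          ν ^ ν / (Real.Gamma ν * w ^ ν) *
            ∑ m ∈ Finset.range (M + 1),
              (-1 : ℝ) ^ m * ν ^ m / ((m.factorial : ℝ) * w ^ m) *
                mellinR (discreteMMSE x p) (1 + ν + m) * snr ^ (-(1 : ℝ) - ν - m))
      =O[atTop] (fun snr : ℝ => snr ^ (-(2 : ℝ) - ν - M)) :=
  highSnr_avgMMSE_nakagami_general ν w hν hw x p hp M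
end

section
/- For every z ∈ ℂ with Re z > −1 and every c ≥ 0, the integral ∫₀^∞ u^z·e^{−u}·I₀(2√(u·c)) du converges absolutely and equals ∑_{n=0}^∞ Γ(z+1+n)·c^n/(n!)², where I₀(x) = ∑_{n=0}^∞ (x/2)^{2n}/(n!)². Equivalently, ∫₀^∞ u^z·e^{−u}·I₀(2√(u·c)) du = Γ(z+1)·₁F₁(z+1; 1; c), where ₁F₁(a; 1; x) = ∑_{n=0}^∞ (Γ(a+n)/Γ(a))·x^n/(n!)². (Mellin transform identity underlying the Ricean fading kernel computations.) -/
/-!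
Expanding `I₀(2√(uc)) = ∑ (uc)ⁿ/(n!)²` turns the integrand into `∑ cⁿ/(n!)² · uᶻ⁺ⁿ e⁻ᵘ`, whose
terms integrate to `Γ(z+1+n) cⁿ/(n!)²`. Summing and integrating may be interchanged because the
integrals of the absolute values of the terms, `Γ(Re z+1+n) cⁿ/(n!)²`, form a convergent series
(ratio test).
-/

open MeasureTheory Filter Asymptotics Topology

noncomputable def besselI0 (x : ℝ) : ℝ :=
  ∑' n : ℕ, (x / 2) ^ (2 * n) / ((n.factorial : ℝ)) ^ 2

open Set Nat

section TermwiseIntegration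

variable {α E : Type*} [MeasurableSpace α] {μ : Measure α} [NormedAddCommGroup E]

theorem integrable_of_hasSum_of_summable_integral_norm {F : ℕ → α → E} {f : α → E}
    (hF_int : ∀ n, Integrable (F n) μ) (hF_sum : Summable fun n ↦ ∫ a, ‖F n a‖ ∂μ)
    (hf : ∀ᵐ a ∂μ, HasSum (F · a) (f a)) : Integrable f μ := by
  refine ⟨aestronglyMeasurable_of_tendsto_ae atTop
    (fun N ↦ Finset.aestronglyMeasurable_fun_sum _ fun n _ ↦ (hF_int n).1)
    (hf.mono fun a ha ↦ ha.tendsto_sum_nat), ?_⟩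
  rw [hasFiniteIntegral_iff_enorm]
  calc ∫⁻ a, ‖f a‖ₑ ∂μ ≤ ∫⁻ a, ∑' n, ‖F n a‖ₑ ∂μ :=
        lintegral_mono_ae <| hf.mono fun a ha ↦ ha.tsum_eq ▸ enorm_tsum_le_tsum_enorm
    _ = ∑' n, ENNReal.ofReal (∫ a, ‖F n a‖ ∂μ) := by
        rw [lintegral_tsum fun n ↦ (hF_int n).1.enorm]
        simp_rw [ofReal_integral_norm_eq_lintegral_enorm (hF_int _)]
    _ = ENNReal.ofReal (∑' n, ∫ a, ‖F n a‖ ∂μ) :=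
        (ENNReal.ofReal_tsum_of_nonneg (fun n ↦ integral_nonneg fun _ ↦ norm_nonneg _) hF_sum).symm
    _ < ⊤ := ENNReal.ofReal_lt_top

theorem hasSum_integral_of_hasSum_of_summable_integral_norm [NormedSpace ℝ E] {F : ℕ → α → E}
    {f : α → E} (hF_int : ∀ n, Integrable (F n) μ) (hF_sum : Summable fun n ↦ ∫ a, ‖F n a‖ ∂μ)
    (hf : ∀ᵐ a ∂μ, HasSum (F · a) (f a)) : HasSum (fun n ↦ ∫ a, F n a ∂μ) (∫ a, f a ∂μ) := by
  rw [integral_congr_ae (hf.mono fun a ha ↦ ha.tsum_eq.symm)]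
  exact hasSum_integral_of_summable_integral_norm hF_int hF_sum

end TermwiseIntegration

theorem Complex.integral_norm_GammaIntegrand {s : ℂ} (hs : 0 < s.re) :
    ∫ x in Ioi (0 : ℝ), ‖(Real.exp (-x) : ℂ) * (x : ℂ) ^ (s - 1)‖ = Real.Gamma s.re := by
  rw [Real.Gamma_eq_integral hs]
  refine setIntegral_congr_fun measurableSet_Ioi fun x hx ↦ ?_
  rw [norm_mul, Complex.norm_real, Real.norm_of_nonneg (Real.exp_pos _).le,
    Complex.norm_cpow_eq_rpow_re_of_pos hx, Complex.sub_re, Complex.one_re]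

theorem summable_pow_div_factorial_sq (x : ℝ) :
    Summable fun n : ℕ ↦ x ^ n / (n ! : ℝ) ^ 2 := by
  refine Summable.of_norm_bounded (Real.summable_pow_div_factorial |x|) fun n ↦ ?_
  rw [norm_div, norm_pow, Real.norm_eq_abs, norm_pow, Real.norm_natCast]
  gcongr
  exact_mod_cast Nat.le_self_pow two_ne_zero _

theorem hasSum_besselI0_two_mul_sqrt {x : ℝ} (hx : 0 ≤ x) :
    HasSum (fun n : ℕ ↦ x ^ n / (n ! : ℝ) ^ 2) (besselI0 (2 * Real.sqrt x)) := by
  convert (summable_pow_div_factorial_sq x).hasSum using 2 with n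
  rw [besselI0]
  congr 1 with n
  rw [mul_div_cancel_left₀ _ two_ne_zero, pow_mul, Real.sq_sqrt hx]

theorem summable_Gamma_add_mul_pow_div_factorial_sq {a : ℝ} (ha : 0 < a) (c : ℝ) :
    Summable fun n : ℕ ↦ Real.Gamma (a + n) * c ^ n / (n ! : ℝ) ^ 2 := by
  have hstep (n : ℕ) : Real.Gamma (a + ↑(n + 1)) * c ^ (n + 1) / ((n + 1) ! : ℝ) ^ 2 =
      (a + n) * c / ((n : ℝ) + 1) ^ 2 * (Real.Gamma (a + n) * c ^ n / (n ! : ℝ) ^ 2) := by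
    rw [Nat.cast_succ, ← add_assoc, Real.Gamma_add_one (by positivity), Nat.factorial_succ]
    push_cast
    field_simp
    ring
  refine summable_of_ratio_norm_eventually_le (r := 1 / 2) (by norm_num) ?_
  filter_upwards [eventually_ge_atTop ⌈2 * (a + 1) * |c|⌉₊] with n hn
  have hn' : 2 * (a + 1) * |c| ≤ n := Nat.ceil_le.mp hn
  rw [hstep, norm_mul]
  refine mul_le_mul_of_nonneg_right ?_ (norm_nonneg _)
  rw [norm_div, norm_mul, Real.norm_of_nonneg (by positivity), Real.norm_eq_abs,
    Real.norm_of_nonneg (by positivity), div_le_iff₀ (by positivity)]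
  nlinarith [abs_nonneg c, mul_nonneg ha.le (abs_nonneg c), (n.cast_nonneg : (0 : ℝ) ≤ n)]

theorem hasSum_cpow_mul_exp_neg_mul_besselI0 (z : ℂ) {u c : ℝ} (hu : 0 < u) (hc : 0 ≤ c) :
    HasSum (fun n : ℕ ↦ ((c ^ n / (n ! : ℝ) ^ 2 : ℝ) : ℂ) *
        ((Real.exp (-u) : ℂ) * (u : ℂ) ^ (z + 1 + n - 1)))
      ((u : ℂ) ^ z * ((Real.exp (-u) * besselI0 (2 * Real.sqrt (u * c)) : ℝ) : ℂ)) := by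
  have hterm (n : ℕ) : (u : ℂ) ^ (z + 1 + n - 1) = (u : ℂ) ^ z * (u : ℂ) ^ n := by
    rw [add_sub_right_comm, add_sub_cancel_right,
      Complex.cpow_add _ _ (Complex.ofReal_ne_zero.mpr hu.ne'), Complex.cpow_natCast]
  rw [Complex.ofReal_mul, ← mul_assoc]
  refine ((Complex.hasSum_ofReal.mpr (hasSum_besselI0_two_mul_sqrt (mul_nonneg hu.le hc))).mul_left
    ((u : ℂ) ^ z * (Real.exp (-u) : ℂ))).congr_fun fun n ↦ ?_
  rw [hterm]
  push_cast
  ring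

theorem Complex.re_add_one_add_natCast_pos {z : ℂ} (hz : -1 < z.re) (n : ℕ) :
    0 < (z + 1 + n).re := by
  simp only [Complex.add_re, Complex.one_re, Complex.natCast_re]
  linarith [n.cast_nonneg (α := ℝ)]

theorem summable_integral_norm_pow_div_factorial_sq_mul_GammaIntegrand {z : ℂ} (hz : -1 < z.re)
    {c : ℝ} (hc : 0 ≤ c) :
    Summable fun n : ℕ ↦ ∫ u in Ioi (0 : ℝ),
      ‖((c ^ n / (n ! : ℝ) ^ 2 : ℝ) : ℂ) * ((Real.exp (-u) : ℂ) * (u : ℂ) ^ (z + 1 + n - 1))‖ := by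
  refine (summable_Gamma_add_mul_pow_div_factorial_sq (by linarith : 0 < z.re + 1) c).congr
    fun n ↦ ?_
  rw [integral_congr_ae (ae_of_all _ fun u ↦ norm_mul _ _), integral_const_mul,
    Complex.integral_norm_GammaIntegrand (Complex.re_add_one_add_natCast_pos hz n),
    Complex.norm_real, Real.norm_of_nonneg (by positivity)]
  simp only [Complex.add_re, Complex.one_re, Complex.natCast_re]
  ring

/-- Mellin-transform identity underlying the Ricean fading kernel computations:
`∫₀^∞ u^z e^{-u} I₀(2√(uc)) du = ∑ₙ Γ(z+1+n) cⁿ/(n!)² = Γ(z+1)·₁F₁(z+1; 1; c)`. -/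
theorem mellin_exp_besselI0 (z : ℂ) (hz : -1 < z.re) (c : ℝ) (hc : 0 ≤ c) :
    IntegrableOn
      (fun u : ℝ => (u : ℂ) ^ z * ((Real.exp (-u) * besselI0 (2 * Real.sqrt (u * c)) : ℝ) : ℂ))
      (Set.Ioi 0) ∧
    (∫ u in Set.Ioi (0 : ℝ),
        (u : ℂ) ^ z * ((Real.exp (-u) * besselI0 (2 * Real.sqrt (u * c)) : ℝ) : ℂ)) =
      (∑' n : ℕ, Complex.Gamma (z + 1 + n) * (c : ℂ) ^ n / ((n.factorial : ℂ)) ^ 2) ∧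
    (∫ u in Set.Ioi (0 : ℝ),
        (u : ℂ) ^ z * ((Real.exp (-u) * besselI0 (2 * Real.sqrt (u * c)) : ℝ) : ℂ)) =
      Complex.Gamma (z + 1) *
        ∑' n : ℕ,
          Complex.Gamma (z + 1 + n) / Complex.Gamma (z + 1) * (c : ℂ) ^ n /
            ((n.factorial : ℂ)) ^ 2 := by
  set F : ℕ → ℝ → ℂ := fun n u ↦ ((c ^ n / (n ! : ℝ) ^ 2 : ℝ) : ℂ) *
    ((Real.exp (-u) : ℂ) * (u : ℂ) ^ (z + 1 + n - 1))
  have hF_int (n : ℕ) : IntegrableOn (F n) (Ioi 0) :=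
    (Complex.GammaIntegral_convergent (Complex.re_add_one_add_natCast_pos hz n)).const_mul _
  have hF_sum := summable_integral_norm_pow_div_factorial_sq_mul_GammaIntegrand hz hc
  have hf : ∀ᵐ u ∂volume.restrict (Ioi 0), HasSum (F · u)
      ((u : ℂ) ^ z * ((Real.exp (-u) * besselI0 (2 * Real.sqrt (u * c)) : ℝ) : ℂ)) :=
    ae_restrict_of_forall_mem measurableSet_Ioi fun u hu ↦
      hasSum_cpow_mul_exp_neg_mul_besselI0 z hu hc
  have hvalue : (∫ u in Ioi (0 : ℝ), (u : ℂ) ^ z *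
      ((Real.exp (-u) * besselI0 (2 * Real.sqrt (u * c)) : ℝ) : ℂ)) =
      ∑' n : ℕ, Complex.Gamma (z + 1 + n) * (c : ℂ) ^ n / ((n.factorial : ℂ)) ^ 2 := by
    refine (hasSum_integral_of_hasSum_of_summable_integral_norm hF_int hF_sum hf).tsum_eq.symm.trans
      (tsum_congr fun n ↦ ?_)
    rw [integral_const_mul, ← Complex.GammaIntegral,
      ← Complex.Gamma_eq_integral (Complex.re_add_one_add_natCast_pos hz n)]
    push_cast
    ring
  refine ⟨integrable_of_hasSum_of_summable_integral_norm hF_int hF_sum hf, hvalue, ?_⟩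
  have hΓ : Complex.Gamma (z + 1) ≠ 0 :=
    Complex.Gamma_ne_zero_of_re_pos (by simp only [Complex.add_re, Complex.one_re]; linarith)
  rw [hvalue, ← tsum_mul_left]
  congr 1 with n
  field_simp
end

section
/- Let τ > 0, ε > 0, s₀ > 0, and let p, λ : ℝ → ℝ satisfy: λ(s) > 0 and ε ≤ p(s) ≤ 1/ε for all s > s₀; the function s ↦ λ(s)·s − τ/p(s)² is O(1/s) as s → +∞; and the function s ↦ 1/(λ(s)·s) is O(1) as s → +∞. Then p(s) = √(τ/(λ(s)·s)) + O(1/s) as s → +∞. (Asymptotic form of the optimal power allocation: together with the KKT condition snr·avgmmse_i(snr·p_i) = λ, this yields the high-snr power allocation p_i* = √(e^{−|μ_i|²/(2σ_i²)}·M[mmse_i;2]/(2σ_i²·λ·snr)) + O(1/snr) maximizing the constrained capacity of a bank of parallel independent Rayleigh/Ricean fading coherent channels driven by discrete inputs.) -/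
open Filter Asymptotics

/-!
Write `q = √(τ/(λ s))`. Since `q² = τ/(λ s)`, one has
`p² − q² = (p²/(λ s)) · (λ s − τ/p²)`, a bounded factor times an `O(1/s)` one.
As `p + q ≥ ε`, dividing `p² − q²` by `p + q` keeps it `O(1/s)`.
-/

theorem sq_sub_div_eq_div_mul_sub_div_sq {a b : ℝ} (τ : ℝ) (ha : a ≠ 0) (hb : b ≠ 0) :
    a ^ 2 - τ / b = a ^ 2 / b * (b - τ / a ^ 2) := by
  field_simp

theorem Asymptotics.isBigO_sub_sq_sub_sq {α : Type*} {l : Filter α} {f g : α → ℝ} {c : ℝ}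
    (hc : 0 < c) (hfg : ∀ᶠ x in l, c ≤ f x + g x) :
    (f - g) =O[l] fun x => f x ^ 2 - g x ^ 2 := by
  refine IsBigO.of_bound c⁻¹ (hfg.mono fun x hx => ?_)
  have hsq : f x ^ 2 - g x ^ 2 = (f x - g x) * (f x + g x) := by ring
  rw [Pi.sub_apply, Real.norm_eq_abs, Real.norm_eq_abs, hsq, abs_mul,
    abs_of_pos (hc.trans_le hx), inv_mul_eq_div, le_div_iff₀ hc]
  exact mul_le_mul_of_nonneg_left hx (by positivity)

theorem powerAllocation_asymptotics_general (τ ε s₀ : ℝ) (hτ : 0 < τ) (hε : 0 < ε)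
    (p lam : ℝ → ℝ)
    (hlam : ∀ s : ℝ, s₀ < s → 0 < lam s)
    (hbound : ∀ s : ℝ, s₀ < s → ε ≤ p s ∧ p s ≤ 1 / ε)
    (h1 : (fun s : ℝ => lam s * s - τ / (p s) ^ 2) =O[atTop] fun s : ℝ => 1 / s)
    (h2 : (fun s : ℝ => 1 / (lam s * s)) =O[atTop] fun _ : ℝ => (1 : ℝ)) :
    (fun s : ℝ => p s - Real.sqrt (τ / (lam s * s))) =O[atTop] fun s : ℝ => 1 / s := by
  have hlarge : ∀ᶠ s in atTop, s₀ < s ∧ 0 < s :=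
    (eventually_gt_atTop s₀).and (eventually_gt_atTop 0)
  have hp_bdd : p =O[atTop] fun _ => (1 : ℝ) :=
    IsBigO.of_bound (1 / ε) <| hlarge.mono fun s ⟨hs, _⟩ => by
      obtain ⟨hlo, hhi⟩ := hbound s hs
      rwa [norm_one, mul_one, Real.norm_eq_abs, abs_of_pos (hε.trans_le hlo)]
  have hfactor : (fun s => p s ^ 2 / (lam s * s)) =O[atTop] fun _ => (1 : ℝ) :=
    ((hp_bdd.pow 2).mul h2).congr (fun s => (div_eq_mul_one_div _ _).symm) fun _ => by norm_num
  have hsq_diff :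
      (fun s => p s ^ 2 - Real.sqrt (τ / (lam s * s)) ^ 2) =O[atTop] fun s => 1 / s := by
    refine (hfactor.mul h1).congr' (hlarge.mono fun s ⟨hs, hs0⟩ => ?_)
      (.of_forall fun s => one_mul (1 / s))
    have hL : 0 < lam s * s := mul_pos (hlam s hs) hs0
    dsimp only
    rw [Real.sq_sqrt (div_nonneg hτ.le hL.le), sq_sub_div_eq_div_mul_sub_div_sq τ
      (hε.trans_le (hbound s hs).1).ne' hL.ne']
  exact (isBigO_sub_sq_sub_sq hε <| hlarge.mono fun s ⟨hs, _⟩ => by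
    linarith [(hbound s hs).1, Real.sqrt_nonneg (τ / (lam s * s))]).trans hsq_diff

/-- Asymptotic form of the optimal power allocation: if `ε ≤ p(s) ≤ 1/ε` and `λ(s) > 0`
beyond `s₀`, `λ(s)·s − τ/p(s)² = O(1/s)` and `1/(λ(s)·s) = O(1)` as `s → +∞`, then
`p(s) = √(τ/(λ(s)·s)) + O(1/s)` as `s → +∞`. -/
theorem powerAllocation_asymptotics (τ ε s₀ : ℝ) (hτ : 0 < τ) (hε : 0 < ε) (hs₀ : 0 < s₀)
    (p lam : ℝ → ℝ)
    (hlam : ∀ s : ℝ, s₀ < s → 0 < lam s)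
    (hbound : ∀ s : ℝ, s₀ < s → ε ≤ p s ∧ p s ≤ 1 / ε)
    (h1 : (fun s : ℝ => lam s * s - τ / (p s) ^ 2) =O[atTop] fun s : ℝ => 1 / s)
    (h2 : (fun s : ℝ => 1 / (lam s * s)) =O[atTop] fun _ : ℝ => (1 : ℝ)) :
    (fun s : ℝ => p s - Real.sqrt (τ / (lam s * s))) =O[atTop] fun s : ℝ => 1 / s :=
  powerAllocation_asymptotics_general τ ε s₀ hτ hε p lam hlam hbound h1 h2
end
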